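/- Let G = (V, E) be a graph with V = {1,…,n} and let (X_a)_{a∈A}, A = {∅} ∪ E, be the reduction family (s = (n+4)³, R = R_{n+4}, X_∅ = (V−s−n) ∪ (R−s) ∪ (R+n) ∪ (V+s+n), X_e = {z_e − n} ∪ R ∪ {y_e + s}). If (t_a)_{a∈A} ∈ ℤ^A satisfies t_∅ = 0 and |⋃_{a∈A} (X_a + t_a)| ≤ |X_∅| + k for some k < n, then C = ⋃_{e∈E} (X_e + t_e) \ X_∅ is a vertex cover of G of cardinality at most k. -/

import Mathlib

/-!
`R = R_{n+4}` is a Sidon set whose elements are more than `n` apart. Hence a translate `R + τ`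
meets each of the four blocks of `X_∅` in at most one point unless it coincides with the block
`R + n` or `R - s`; otherwise it adds at least `|R| - 4 = n > k` new points to the union. So every
`t_e` is `n` or `-s`, and then `X_e + t_e` adds to `X_∅` exactly the one endpoint `z_e` or `y_e`.
-/

/-- `Rset m = {(i-1)·m² + i² : 1 ≤ i ≤ m}` as a finite set of integers. -/
def Rset (m : ℕ) : Finset ℤ :=
  (Finset.Icc 1 m).image fun i : ℕ => ((i : ℤ) - 1) * (m : ℤ) ^ 2 + (i : ℤ) ^ 2

/-- The translate `S + t = {s + t : s ∈ S}`. -/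
def shift (S : Finset ℤ) (t : ℤ) : Finset ℤ := S.image (· + t)

/-- The shift value `s = (n+4)³` of the vertex-cover reduction. -/
def sVal (n : ℕ) : ℤ := ((n : ℤ) + 4) ^ 3

/-- `X_∅ = (V - s - n) ∪ (R - s) ∪ (R + n) ∪ (V + s + n)` where `V = {1,…,n}`
and `R = R_{n+4}`. -/
noncomputable def Xzero (n : ℕ) : Finset ℤ :=
  shift (Finset.Icc (1 : ℤ) (n : ℤ)) (-(sVal n + n)) ∪ shift (Rset (n + 4)) (-sVal n)
    ∪ shift (Rset (n + 4)) n ∪ shift (Finset.Icc (1 : ℤ) (n : ℤ)) (sVal n + n)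

/-- `X_e = {z_e - n} ∪ R ∪ {y_e + s}` for an edge `e` with endpoints `y_e`, `z_e`. -/
def Xedge (n : ℕ) (ye ze : ℤ) : Finset ℤ :=
  {ze - (n : ℤ)} ∪ Rset (n + 4) ∪ {ye + sVal n}

/-- The reduction family `(X_a)_{a ∈ A}` with `A = {∅} ∪ E`, modelled on `Option E`
(`none` plays the role of `∅`). -/
noncomputable def Xfam (n : ℕ) {E : Type*} (y z : E → ℤ) : Option E → Finset ℤ :=
  fun a => a.elim (Xzero n) fun e => Xedge n (y e) (z e)

open Finset

def IsSidon (S : Finset ℤ) : Prop :=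
  ∀ p ∈ S, ∀ q ∈ S, ∀ p' ∈ S, ∀ q' ∈ S, p - q = p' - q' → p ≠ q → p = p'

section Shift

lemma mem_shift {S : Finset ℤ} {t x : ℤ} : x ∈ shift S t ↔ x - t ∈ S := by
  simp only [shift, mem_image]
  exact ⟨fun ⟨s, hs, hx⟩ => by simpa [← hx] using hs, fun h => ⟨x - t, h, by ring⟩⟩

lemma shift_zero (S : Finset ℤ) : shift S 0 = S := by
  ext x; simp [mem_shift]

lemma card_shift (S : Finset ℤ) (t : ℤ) : #(shift S t) = #S :=
  card_image_of_injective _ (add_left_injective t)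

lemma shift_mono {S T : Finset ℤ} (h : S ⊆ T) (t : ℤ) : shift S t ⊆ shift T t :=
  image_subset_image h

lemma shift_Icc (a b t : ℤ) : shift (Icc a b) t = Icc (a + t) (b + t) :=
  image_add_right_Icc a b t

lemma IsSidon.card_shift_inter_shift_le_one {S : Finset ℤ} (hS : IsSidon S) {τ τ' : ℤ}
    (h : τ ≠ τ') : #(shift S τ ∩ shift S τ') ≤ 1 := by
  refine card_le_one.2 fun x hx u hu => ?_
  simp only [mem_inter, mem_shift] at hx hu
  have := hS _ hx.1 _ hx.2 _ hu.1 _ hu.2 (by ring) (by omega)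
  omega

lemma card_shift_inter_Icc_le_one {S : Finset ℤ} {g : ℤ}
    (hS : ∀ x ∈ S, ∀ u ∈ S, x < u → x + g ≤ u) (τ : ℤ) {a b : ℤ} (hab : b - a < g) :
    #(shift S τ ∩ Icc a b) ≤ 1 := by
  refine card_le_one.2 fun x hx u hu => ?_
  simp only [mem_inter, mem_shift, mem_Icc] at hx hu
  by_contra hne
  rcases lt_or_gt_of_ne hne with h | h
  · have := hS _ hx.1 _ hu.1 (by omega); omega
  · have := hS _ hu.1 _ hx.1 (by omega); omega

end Shift

section Rset

variable {m : ℕ}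

lemma mem_Rset {x : ℤ} :
    x ∈ Rset m ↔ ∃ i : ℤ, 1 ≤ i ∧ i ≤ m ∧ (i - 1) * (m : ℤ) ^ 2 + i ^ 2 = x := by
  simp only [Rset, mem_image, mem_Icc]
  constructor
  · rintro ⟨i, ⟨h1, h2⟩, rfl⟩
    exact ⟨i, by exact_mod_cast h1, by exact_mod_cast h2, rfl⟩
  · rintro ⟨i, h1, h2, rfl⟩
    lift i to ℕ using by omega
    exact ⟨i, ⟨by exact_mod_cast h1, by exact_mod_cast h2⟩, rfl⟩

lemma card_Rset : #(Rset m) = m := by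
  have hmono : StrictMono fun i : ℕ => ((i : ℤ) - 1) * (m : ℤ) ^ 2 + (i : ℤ) ^ 2 := by
    intro i j hij
    have : (i : ℤ) < j := by exact_mod_cast hij
    dsimp only
    nlinarith [sq_nonneg (m : ℤ), Int.natCast_nonneg i]
  rw [Rset, card_image_of_injective _ hmono.injective, Nat.card_Icc, Nat.add_sub_cancel]

lemma Rset_subset_Icc : Rset m ⊆ Icc 1 ((m : ℤ) ^ 3) := by
  intro x hx
  obtain ⟨i, h1, h2, rfl⟩ := mem_Rset.1 hx
  rw [mem_Icc]
  constructor <;> nlinarith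

lemma Rset_add_sq_le {x u : ℤ} (hx : x ∈ Rset m) (hu : u ∈ Rset m) (hxu : x < u) :
    x + (m : ℤ) ^ 2 ≤ u := by
  obtain ⟨i, hi1, -, rfl⟩ := mem_Rset.1 hx
  obtain ⟨j, hj1, -, rfl⟩ := mem_Rset.1 hu
  have hij : i < j := by
    by_contra! h
    nlinarith [sq_nonneg (m : ℤ)]
  nlinarith [sq_nonneg (m : ℤ)]

/-- As `0 ≤ i² - j² < m²`, the difference `(i - j) m² + (i² - j²)` of two elements of `Rset m`
determines both `i - j` and `i² - j²`. -/
lemma Rset_sub_ediv_emod {i j : ℤ} (hj : 1 ≤ j) (hji : j < i) (hi : i ≤ m) :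
    ((i - 1) * (m : ℤ) ^ 2 + i ^ 2 - ((j - 1) * (m : ℤ) ^ 2 + j ^ 2)) / (m : ℤ) ^ 2 = i - j ∧
      ((i - 1) * (m : ℤ) ^ 2 + i ^ 2 - ((j - 1) * (m : ℤ) ^ 2 + j ^ 2)) % (m : ℤ) ^ 2
        = i ^ 2 - j ^ 2 := by
  rw [Int.ediv_emod_unique (by nlinarith)]
  refine ⟨by ring, by nlinarith, by nlinarith⟩

lemma isSidon_Rset : IsSidon (Rset m) := by
  intro p hp q hq p' hp' q' hq' hd hpq
  wlog hlt : q < p generalizing p q p' q'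
  · have := this q hq p hp q' hq' p' hp' (by omega) (Ne.symm hpq) (by omega)
    omega
  obtain ⟨i, hi1, hi2, rfl⟩ := mem_Rset.1 hp
  obtain ⟨j, hj1, hj2, rfl⟩ := mem_Rset.1 hq
  obtain ⟨i', hi1', hi2', rfl⟩ := mem_Rset.1 hp'
  obtain ⟨j', hj1', hj2', rfl⟩ := mem_Rset.1 hq'
  have hji : j < i := by
    by_contra! h
    nlinarith [sq_nonneg (m : ℤ)]
  have hji' : j' < i' := by
    by_contra! h
    nlinarith [sq_nonneg (m : ℤ)]
  obtain ⟨hquot, hrem⟩ := Rset_sub_ediv_emod hj1 hji hi2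
  obtain ⟨hquot', hrem'⟩ := Rset_sub_ediv_emod hj1' hji' hi2'
  rw [hd] at hquot hrem
  have hdiff : i - j = i' - j' := hquot.symm.trans hquot'
  have hsum : i + j = i' + j' := by
    have hsq : (i - j) * (i + j) = (i - j) * (i' + j') := by
      linear_combination hrem.symm.trans hrem' - (i' + j') * hdiff
    exact mul_left_cancel₀ (by omega) hsq
  obtain rfl : i = i' := by omega
  rfl

end Rset

section Reduction

variable {n : ℕ}

lemma Rset_subset_Icc_sVal : Rset (n + 4) ⊆ Icc 1 (sVal n) := by
  simpa [sVal] using Rset_subset_Icc (m := n + 4)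

lemma mem_Xzero {x : ℤ} :
    x ∈ Xzero n ↔ (1 ≤ x + (sVal n + n) ∧ x + (sVal n + n) ≤ n) ∨ x + sVal n ∈ Rset (n + 4) ∨
      x - n ∈ Rset (n + 4) ∨ (1 ≤ x - (sVal n + n) ∧ x - (sVal n + n) ≤ n) := by
  simp only [Xzero, mem_union, mem_shift, mem_Icc, sub_neg_eq_add, or_assoc]

lemma Rset_subset_Xedge (y z : ℤ) : Rset (n + 4) ⊆ Xedge n y z :=
  subset_union_right.trans subset_union_left

lemma not_mem_Xzero {v : ℤ} (hv : v ∈ Icc 1 (n : ℤ)) : v ∉ Xzero n := by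
  rw [mem_Icc] at hv
  have hs : 0 < sVal n := by unfold sVal; positivity
  intro h
  rcases mem_Xzero.1 h with h | h | h | h
  · omega
  · have := mem_Icc.1 (Rset_subset_Icc_sVal h); omega
  · have := mem_Icc.1 (Rset_subset_Icc_sVal h); omega
  · omega

lemma card_shift_Rset_inter_Xzero_le {τ : ℤ} (hτn : τ ≠ n) (hτs : τ ≠ -sVal n) :
    #(shift (Rset (n + 4)) τ ∩ Xzero n) ≤ 4 := by
  have hIcc : ∀ c : ℤ, #(shift (Rset (n + 4)) τ ∩ Icc (1 + c) (n + c)) ≤ 1 := fun c =>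
    card_shift_inter_Icc_le_one (fun x hx u hu => Rset_add_sq_le hx hu) τ
      (by push_cast; nlinarith)
  rw [Xzero, shift_Icc, shift_Icc, inter_union_distrib_left, inter_union_distrib_left,
    inter_union_distrib_left]
  calc _ ≤ _ + _ := card_union_le _ _
    _ ≤ (_ + _) + _ := by gcongr; exact card_union_le _ _
    _ ≤ ((_ + _) + _) + _ := by gcongr; exact card_union_le _ _
    _ ≤ ((1 + 1) + 1) + 1 := by
      gcongr
      · exact hIcc _
      · exact isSidon_Rset.card_shift_inter_shift_le_one hτs
      · exact isSidon_Rset.card_shift_inter_shift_le_one hτn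
      · exact hIcc _

lemma eq_or_eq_neg_sVal_of_card_shift_Rset_sdiff_lt {τ : ℤ}
    (h : #(shift (Rset (n + 4)) τ \ Xzero n) < n) : τ = n ∨ τ = -sVal n := by
  by_contra! hτ
  have hinter := card_shift_Rset_inter_Xzero_le hτ.1 hτ.2
  have hsplit := card_inter_add_card_sdiff (shift (Rset (n + 4)) τ) (Xzero n)
  rw [card_shift, card_Rset] at hsplit
  omega

lemma shift_Xedge_natCast_sdiff_Xzero {y z : ℤ} (hz : z ∈ Icc 1 (n : ℤ)) (hy : y ∈ Icc 1 (n : ℤ)) :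
    shift (Xedge n y z) n \ Xzero n = {z} := by
  ext x
  simp only [Xedge, mem_sdiff, mem_shift, mem_union, mem_singleton]
  constructor
  · rintro ⟨(h | h) | h, hx⟩
    · omega
    · exact absurd (mem_Xzero.2 (Or.inr (Or.inr (Or.inl h)))) hx
    · rw [mem_Icc] at hy
      exact absurd (mem_Xzero.2 (Or.inr (Or.inr (Or.inr (by omega))))) hx
  · rintro rfl
    exact ⟨Or.inl (Or.inl rfl), not_mem_Xzero hz⟩

lemma shift_Xedge_neg_sVal_sdiff_Xzero {y z : ℤ} (hz : z ∈ Icc 1 (n : ℤ))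
    (hy : y ∈ Icc 1 (n : ℤ)) : shift (Xedge n y z) (-sVal n) \ Xzero n = {y} := by
  ext x
  simp only [Xedge, mem_sdiff, mem_shift, mem_union, mem_singleton]
  constructor
  · rintro ⟨(h | h) | h, hx⟩
    · rw [mem_Icc] at hz
      exact absurd (mem_Xzero.2 (Or.inl (by omega))) hx
    · exact absurd (mem_Xzero.2 (Or.inr (Or.inl (by simpa using h)))) hx
    · omega
  · rintro rfl
    exact ⟨Or.inr (by ring), not_mem_Xzero hy⟩

lemma shift_Xedge_sdiff_Xzero_eq_singleton {y z τ : ℤ} (hz : z ∈ Icc 1 (n : ℤ))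
    (hy : y ∈ Icc 1 (n : ℤ)) (h : #(shift (Xedge n y z) τ \ Xzero n) < n) :
    shift (Xedge n y z) τ \ Xzero n = {z} ∨ shift (Xedge n y z) τ \ Xzero n = {y} := by
  have hR : shift (Rset (n + 4)) τ \ Xzero n ⊆ shift (Xedge n y z) τ \ Xzero n :=
    sdiff_subset_sdiff (shift_mono (Rset_subset_Xedge y z) τ) le_rfl
  rcases eq_or_eq_neg_sVal_of_card_shift_Rset_sdiff_lt ((card_le_card hR).trans_lt h) with rfl | rfl
  · exact .inl (shift_Xedge_natCast_sdiff_Xzero hz hy)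
  · exact .inr (shift_Xedge_neg_sVal_sdiff_Xzero hz hy)

end Reduction

theorem stmt_18_general (n : ℕ) {E : Type*} [Fintype E]
    (y z : E → ℤ)
    (hy : ∀ e, y e ∈ Finset.Icc (1 : ℤ) (n : ℤ))
    (hz : ∀ e, z e ∈ Finset.Icc (1 : ℤ) (n : ℤ))
    (t : Option E → ℤ) (ht0 : t none = 0) (k : ℕ) (hk : k < n)
    (hcard : (Finset.univ.biUnion fun a : Option E => shift (Xfam n y z a) (t a)).card
      ≤ (Xzero n).card + k) :
    ((Finset.univ.biUnion fun e : E => shift (Xedge n (y e) (z e)) (t (some e)))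
        \ Xzero n) ⊆ Finset.Icc (1 : ℤ) (n : ℤ)
      ∧ (∀ e : E,
          y e ∈ (Finset.univ.biUnion fun e : E => shift (Xedge n (y e) (z e)) (t (some e)))
              \ Xzero n
            ∨ z e ∈ (Finset.univ.biUnion fun e : E => shift (Xedge n (y e) (z e)) (t (some e)))
              \ Xzero n)
      ∧ ((Finset.univ.biUnion fun e : E => shift (Xedge n (y e) (z e)) (t (some e)))
          \ Xzero n).card ≤ k := by
  set B := univ.biUnion fun e : E => shift (Xedge n (y e) (z e)) (t (some e))
  have hunion : (univ.biUnion fun a : Option E => shift (Xfam n y z a) (t a)) = B ∪ Xzero n := by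
    ext x
    simp [B, Xfam, Option.exists, ht0, shift_zero, or_comm]
  have hBcard : #(B \ Xzero n) ≤ k := by
    have hsplit := card_sdiff_add_card B (Xzero n)
    rw [hunion] at hcard
    omega
  have hpiece_sub (e : E) : shift (Xedge n (y e) (z e)) (t (some e)) \ Xzero n ⊆ B \ Xzero n :=
    sdiff_subset_sdiff
      (subset_biUnion_of_mem (fun e => shift (Xedge n (y e) (z e)) (t (some e))) (mem_univ e))
      le_rfl
  have hpiece (e : E) := shift_Xedge_sdiff_Xzero_eq_singleton (hz e) (hy e)
    ((card_le_card (hpiece_sub e)).trans_lt (hBcard.trans_lt hk))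
  refine ⟨fun x hx => ?_, fun e => ?_, hBcard⟩
  · obtain ⟨hxB, hxX⟩ := mem_sdiff.1 hx
    obtain ⟨e, -, hxe⟩ := mem_biUnion.1 hxB
    have hx' := mem_sdiff.2 ⟨hxe, hxX⟩
    rcases hpiece e with h | h <;> rw [h, mem_singleton] at hx' <;> rw [hx']
    exacts [hz e, hy e]
  · rcases hpiece e with h | h
    · exact .inr (hpiece_sub e (h ▸ mem_singleton_self _))
    · exact .inl (hpiece_sub e (h ▸ mem_singleton_self _))

theorem stmt_18 (n : ℕ) (hn : 1 ≤ n) {E : Type*} [Fintype E] [DecidableEq E]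
    (y z : E → ℤ)
    (hy : ∀ e, y e ∈ Finset.Icc (1 : ℤ) (n : ℤ))
    (hz : ∀ e, z e ∈ Finset.Icc (1 : ℤ) (n : ℤ))
    (hyz : ∀ e, y e ≠ z e)
    (t : Option E → ℤ) (ht0 : t none = 0) (k : ℕ) (hk : k < n)
    (hcard : (Finset.univ.biUnion fun a : Option E => shift (Xfam n y z a) (t a)).card
      ≤ (Xzero n).card + k) :
    ((Finset.univ.biUnion fun e : E => shift (Xedge n (y e) (z e)) (t (some e)))
        \ Xzero n) ⊆ Finset.Icc (1 : ℤ) (n : ℤ)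
      ∧ (∀ e : E,
          y e ∈ (Finset.univ.biUnion fun e : E => shift (Xedge n (y e) (z e)) (t (some e)))
              \ Xzero n
            ∨ z e ∈ (Finset.univ.biUnion fun e : E => shift (Xedge n (y e) (z e)) (t (some e)))
              \ Xzero n)
      ∧ ((Finset.univ.biUnion fun e : E => shift (Xedge n (y e) (z e)) (t (some e)))
          \ Xzero n).card ≤ k :=
  stmt_18_general n y z hy hz t ht0 k hk hcard
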